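/- Let 1 < θ ≤ p < ∞ and 1 < q < ∞ with conjugate exponents p', q'. Let {t_k}_{k∈ℤ} be a p-admissible weight sequence satisfying M_{Q,p}(t_k)·M_{Q,θ(p/θ)'}(t_k^{-1}) ≤ C for all cubes Q and all k. Then for every λ ∈ ḟ_{p',q'}({t_k^{-1}}), the pairing l_λ(s) = Σ_{k∈ℤ} Σ_{m∈ℤⁿ} s_{k,m} conj(λ_{k,m}) converges absolutely for all s ∈ ḟ_{p,q}({t_k}) and satisfies |l_λ(s)| ≤ ‖s|ḟ_{p,q}({t_k})‖ · ‖λ|ḟ_{p',q'}({t_k^{-1}})‖. -/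

import Mathlib

open MeasureTheory ENNReal

noncomputable section

/-- The axis-parallel cube in `ℝⁿ` with lower corner `x` and side length `r`. -/
def cube {n : ℕ} (x : Fin n → ℝ) (r : ℝ) : Set (Fin n → ℝ) :=
  Set.Icc x (fun i => x i + r)

/-- `M_A(f)`: the average of `f` over `A` (an extended nonnegative real). -/
def avg {n : ℕ} (A : Set (Fin n → ℝ)) (f : (Fin n → ℝ) → ℝ) : ℝ≥0∞ :=
  (volume A)⁻¹ * ∫⁻ y in A, ENNReal.ofReal (f y)

/-- `M_{A,r}(f)`: the `r`-th power mean of `|f|` over `A`. -/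
def avgP {n : ℕ} (A : Set (Fin n → ℝ)) (r : ℝ) (f : (Fin n → ℝ) → ℝ) : ℝ≥0∞ :=
  (avg A fun y => |f y| ^ r) ^ (1 / r)

/-- The conjugate exponent `p' = p/(p-1)`. -/
def conjExp (p : ℝ) : ℝ := p / (p - 1)

/-- A weight: a locally integrable function which is a.e. positive. -/
def IsWeight {n : ℕ} (γ : (Fin n → ℝ) → ℝ) : Prop :=
  LocallyIntegrable γ volume ∧ ∀ᵐ x ∂(volume : Measure (Fin n → ℝ)), 0 < γ x

/-- The `A_p` inequality `M_Q(γ) · M_{Q,p'/p}(γ⁻¹) ≤ C` over all cubes. -/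
def ApBound {n : ℕ} (p C : ℝ) (γ : (Fin n → ℝ) → ℝ) : Prop :=
  ∀ (x : Fin n → ℝ) (r : ℝ), 0 < r →
    avg (cube x r) γ * avgP (cube x r) (conjExp p / p) (fun y => (γ y)⁻¹)
      ≤ ENNReal.ofReal C

/-- The Muckenhoupt class `A_p`, `1 < p < ∞`. -/
def IsAp {n : ℕ} (p : ℝ) (γ : (Fin n → ℝ) → ℝ) : Prop :=
  ∃ C : ℝ, 0 < C ∧ ApBound p C γ

/-- The dyadic cube `Q_{k,m} = 2^{-k}([0,1)^n + m)`. -/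
def dyadic (n : ℕ) (k : ℤ) (m : Fin n → ℤ) : Set (Fin n → ℝ) :=
  {y | ∀ i, (m i : ℝ) * (2 : ℝ) ^ (-k) ≤ y i ∧ y i < ((m i : ℝ) + 1) * (2 : ℝ) ^ (-k)}

/-- The (extended nonnegative) absolute values of a complex sequence. -/
def cabs {n : ℕ} (lam : ℤ → (Fin n → ℤ) → ℂ) : ℤ → (Fin n → ℤ) → ℝ≥0∞ :=
  fun k m => ENNReal.ofReal ‖lam k m‖

/-- The function `Σ_{k ≥ kP} Σ_m 2^{knq/2} |t_k(x)|^q a_{k,m}^q χ_{E_{k,m}}(x)`. -/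
def seqBody {n : ℕ} (q : ℝ) (t : ℤ → (Fin n → ℝ) → ℝ)
    (E : ℤ → (Fin n → ℤ) → Set (Fin n → ℝ)) (a : ℤ → (Fin n → ℤ) → ℝ≥0∞)
    (kP : ℤ) (x : Fin n → ℝ) : ℝ≥0∞ :=
  ∑' (k : ℤ), ∑' (m : Fin n → ℤ),
    if kP ≤ k then
      (E k m).indicator
        (fun _ => ENNReal.ofReal ((2 : ℝ) ^ ((k : ℝ) * (n : ℝ) * q / 2) * |t k x| ^ q)
          * a k m ^ q) x
    else 0

/-- The `ḟ_{∞,q}` quasi-norm, with the indicator of `Q_{k,m}` replaced by the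
indicator of a set `E_{k,m}`. -/
def fInfNormE {n : ℕ} (q : ℝ) (t : ℤ → (Fin n → ℝ) → ℝ)
    (E : ℤ → (Fin n → ℤ) → Set (Fin n → ℝ)) (a : ℤ → (Fin n → ℤ) → ℝ≥0∞) : ℝ≥0∞ :=
  ⨆ (kP : ℤ) (mP : Fin n → ℤ),
    ((volume (dyadic n kP mP))⁻¹ *
      ∫⁻ x in dyadic n kP mP, seqBody q t E a kP x) ^ (1 / q)

/-- The `ḟ_{∞,q}(ℝⁿ,{t_k})` quasi-norm of a sequence of coefficient magnitudes. -/
def fInfNorm {n : ℕ} (q : ℝ) (t : ℤ → (Fin n → ℝ) → ℝ)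
    (a : ℤ → (Fin n → ℤ) → ℝ≥0∞) : ℝ≥0∞ :=
  fInfNormE q t (dyadic n) a

/-- `Σ_k Σ_m 2^{knq/2} |t_k(x)|^q a_{k,m}^q χ_{Q_{k,m}}(x)` (sum over all `k ∈ ℤ`). -/
def fpqBody {n : ℕ} (q : ℝ) (t : ℤ → (Fin n → ℝ) → ℝ)
    (a : ℤ → (Fin n → ℤ) → ℝ≥0∞) (x : Fin n → ℝ) : ℝ≥0∞ :=
  ∑' (k : ℤ), ∑' (m : Fin n → ℤ),
    (dyadic n k m).indicator
      (fun _ => ENNReal.ofReal ((2 : ℝ) ^ ((k : ℝ) * (n : ℝ) * q / 2) * |t k x| ^ q)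
        * a k m ^ q) x

/-- The `ḟ_{p,q}(ℝⁿ,{t_k})` quasi-norm of a sequence of coefficient magnitudes. -/
def fpqNorm {n : ℕ} (p q : ℝ) (t : ℤ → (Fin n → ℝ) → ℝ)
    (a : ℤ → (Fin n → ℤ) → ℝ≥0∞) : ℝ≥0∞ :=
  (∫⁻ x, fpqBody q t a x ^ (p / q)) ^ (1 / p)

/-!
Since `|Q_{k,m}| = 2^{-kn}` and `|t_k| · |t_k|⁻¹ = 1` a.e., each term of the pairing is an integral
over its cube: `|s_{k,m}| |λ_{k,m}| = ∫ u_{k,m} v_{k,m}`, where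
`u_{k,m} = 2^{kn/2} |t_k| |s_{k,m}| χ_{Q_{k,m}}` and `v_{k,m} = 2^{kn/2} |t_k|⁻¹ |λ_{k,m}| χ_{Q_{k,m}}`.
After exchanging sum and integral, Hölder's inequality in `(k, m)` with exponents `q, q'` and then
in `x` with exponents `p, p'` bounds the series by the product of the two norms; as both norms are
finite, the series converges absolutely.
-/

namespace ENNReal

theorem inner_le_Lp_mul_Lq_tsum {ι : Type*} (f g : ι → ℝ≥0∞) {p q : ℝ}
    (hpq : p.HolderConjugate q) :
    ∑' i, f i * g i ≤ (∑' i, f i ^ p) ^ (1 / p) * (∑' i, g i ^ q) ^ (1 / q) := by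
  rw [ENNReal.tsum_eq_iSup_sum]
  refine iSup_le fun s => (inner_le_Lp_mul_Lq s f g hpq).trans ?_
  exact mul_le_mul' (rpow_le_rpow (ENNReal.sum_le_tsum s) hpq.one_div_nonneg)
    (rpow_le_rpow (ENNReal.sum_le_tsum s) hpq.symm.one_div_nonneg)

end ENNReal

theorem Real.summable_and_ofReal_tsum_le {ι : Type*} {f : ι → ℝ} {B : ℝ≥0∞}
    (hf : ∀ i, 0 ≤ f i) (hfB : ∑' i, ENNReal.ofReal (f i) ≤ B) (hB : B < ⊤) :
    Summable f ∧ ENNReal.ofReal (∑' i, f i) ≤ B := by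
  have hsum : Summable f := by
    simpa only [ENNReal.toReal_ofReal (hf _)] using
      ENNReal.summable_toReal (hfB.trans_lt hB).ne
  exact ⟨hsum, (ENNReal.ofReal_tsum_of_nonneg hf hsum).trans_le hfB⟩

theorem dyadic_eq_pi (n : ℕ) (k : ℤ) (m : Fin n → ℤ) :
    dyadic n k m = Set.univ.pi
      fun i => Set.Ico ((m i : ℝ) * 2 ^ (-k)) (((m i : ℝ) + 1) * 2 ^ (-k)) := by
  ext y
  simp [dyadic, Set.mem_pi]

theorem measurableSet_dyadic (n : ℕ) (k : ℤ) (m : Fin n → ℤ) :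
    MeasurableSet (dyadic n k m) := by
  rw [dyadic_eq_pi]
  exact .univ_pi fun _ => measurableSet_Ico

theorem volume_dyadic (n : ℕ) (k : ℤ) (m : Fin n → ℤ) :
    volume (dyadic n k m) = ENNReal.ofReal ((2 : ℝ) ^ (-k)) ^ n := by
  simp only [dyadic_eq_pi, volume_pi_pi, Real.volume_Ico, ← sub_mul, add_sub_cancel_left,
    one_mul, Finset.prod_const, Finset.card_univ, Fintype.card_fin]

theorem ofReal_two_rpow_mul_volume_dyadic (n : ℕ) (k : ℤ) (m : Fin n → ℤ) :
    ENNReal.ofReal ((2 : ℝ) ^ ((k : ℝ) * n)) * volume (dyadic n k m) = 1 := by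
  rw [volume_dyadic, ← ENNReal.ofReal_pow (by positivity), ← ENNReal.ofReal_mul (by positivity),
    ← Real.rpow_intCast, ← Real.rpow_natCast, ← Real.rpow_mul zero_le_two,
    ← Real.rpow_add zero_lt_two]
  simp

section DyadicPiece

variable {n : ℕ}

def dyadicPiece (t : ℤ → (Fin n → ℝ) → ℝ) (a : ℤ → (Fin n → ℤ) → ℝ≥0∞)
    (km : ℤ × (Fin n → ℤ)) : (Fin n → ℝ) → ℝ≥0∞ :=
  (dyadic n km.1 km.2).indicator
    fun x => ENNReal.ofReal ((2 : ℝ) ^ ((km.1 : ℝ) * n / 2) * |t km.1 x|) * a km.1 km.2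

theorem aemeasurable_dyadicPiece {t : ℤ → (Fin n → ℝ) → ℝ} (ht : ∀ k, AEMeasurable (t k))
    (a : ℤ → (Fin n → ℤ) → ℝ≥0∞) (km : ℤ × (Fin n → ℤ)) :
    AEMeasurable (dyadicPiece t a km) := by
  refine AEMeasurable.indicator ?_ (measurableSet_dyadic n km.1 km.2)
  fun_prop

theorem tsum_dyadicPiece_rpow {q : ℝ} (hq : 0 < q) (t : ℤ → (Fin n → ℝ) → ℝ)
    (a : ℤ → (Fin n → ℤ) → ℝ≥0∞) (x : Fin n → ℝ) :
    ∑' km, dyadicPiece t a km x ^ q = fpqBody q t a x := by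
  rw [ENNReal.tsum_prod']
  refine tsum_congr fun k => tsum_congr fun m => ?_
  by_cases hx : x ∈ dyadic n k m
  · simp only [dyadicPiece, Set.indicator_of_mem hx]
    rw [ENNReal.mul_rpow_of_nonneg _ _ hq.le, ENNReal.ofReal_rpow_of_nonneg (by positivity) hq.le,
      Real.mul_rpow (by positivity) (abs_nonneg _), ← Real.rpow_mul zero_le_two]
    ring_nf
  · simp [dyadicPiece, hx, ENNReal.zero_rpow_of_pos hq]

theorem lintegral_dyadicPiece_mul_dyadicPiece_inv {t : ℤ → (Fin n → ℝ) → ℝ}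
    (a b : ℤ → (Fin n → ℤ) → ℝ≥0∞) (km : ℤ × (Fin n → ℤ)) (ht : ∀ᵐ x, t km.1 x ≠ 0) :
    ∫⁻ x, dyadicPiece t a km x * dyadicPiece (fun k y => (t k y)⁻¹) b km x
      = a km.1 km.2 * b km.1 km.2 := by
  obtain ⟨k, m⟩ := km
  have hprod : ∀ᵐ x, ENNReal.ofReal ((2 : ℝ) ^ ((k : ℝ) * n / 2) * |t k x|)
      * ENNReal.ofReal ((2 : ℝ) ^ ((k : ℝ) * n / 2) * |(t k x)⁻¹|)
        = ENNReal.ofReal ((2 : ℝ) ^ ((k : ℝ) * n)) := by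
    filter_upwards [ht] with x hx
    rw [← ENNReal.ofReal_mul (by positivity), abs_inv,
      mul_mul_mul_comm, mul_inv_cancel₀ (abs_ne_zero.mpr hx), mul_one,
      ← Real.rpow_add zero_lt_two, add_halves]
  calc ∫⁻ x, dyadicPiece t a (k, m) x * dyadicPiece (fun k y => (t k y)⁻¹) b (k, m) x
      = ∫⁻ x in dyadic n k m, ENNReal.ofReal ((2 : ℝ) ^ ((k : ℝ) * n)) * (a k m * b k m) := by
        rw [← lintegral_indicator (measurableSet_dyadic n k m)]
        refine lintegral_congr_ae ?_
        filter_upwards [hprod] with x hx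
        by_cases hxQ : x ∈ dyadic n k m
        · simp only [dyadicPiece, Set.indicator_of_mem hxQ, ← hx]
          ring
        · simp [dyadicPiece, hxQ]
    _ = a k m * b k m := by
        rw [setLIntegral_const, mul_right_comm, ofReal_two_rpow_mul_volume_dyadic, one_mul]

theorem aemeasurable_fpqBody {q : ℝ} (hq : 0 < q) {t : ℤ → (Fin n → ℝ) → ℝ}
    (ht : ∀ k, AEMeasurable (t k)) (a : ℤ → (Fin n → ℤ) → ℝ≥0∞) :
    AEMeasurable (fpqBody q t a) := by
  simp only [← funext (tsum_dyadicPiece_rpow hq t a)]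
  exact .tsum fun km => (aemeasurable_dyadicPiece ht a km).pow_const q

end DyadicPiece

theorem tsum_mul_le_fpqNorm_mul_fpqNorm {n : ℕ} {p p' q q' : ℝ} (hp : p.HolderConjugate p')
    (hq : q.HolderConjugate q') {t : ℤ → (Fin n → ℝ) → ℝ} (ht : ∀ k, AEMeasurable (t k))
    (ht0 : ∀ k, ∀ᵐ x, t k x ≠ 0) (a b : ℤ → (Fin n → ℤ) → ℝ≥0∞) :
    ∑' km : ℤ × (Fin n → ℤ), a km.1 km.2 * b km.1 km.2
      ≤ fpqNorm p q t a * fpqNorm p' q' (fun k y => (t k y)⁻¹) b := by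
  have ht' : ∀ k, AEMeasurable fun y => (t k y)⁻¹ := fun k => (ht k).inv
  calc ∑' km : ℤ × (Fin n → ℤ), a km.1 km.2 * b km.1 km.2
      = ∑' km, ∫⁻ x, dyadicPiece t a km x * dyadicPiece (fun k y => (t k y)⁻¹) b km x :=
        tsum_congr fun km => (lintegral_dyadicPiece_mul_dyadicPiece_inv a b km (ht0 km.1)).symm
    _ = ∫⁻ x, ∑' km, dyadicPiece t a km x * dyadicPiece (fun k y => (t k y)⁻¹) b km x :=
        (lintegral_tsum fun km =>
          (aemeasurable_dyadicPiece ht a km).mul (aemeasurable_dyadicPiece ht' b km)).symm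
    _ ≤ ∫⁻ x, fpqBody q t a x ^ (1 / q) * fpqBody q' (fun k y => (t k y)⁻¹) b x ^ (1 / q') :=
        lintegral_mono fun x => by
          rw [← tsum_dyadicPiece_rpow hq.pos, ← tsum_dyadicPiece_rpow hq.symm.pos]
          exact ENNReal.inner_le_Lp_mul_Lq_tsum _ _ hq
    _ ≤ fpqNorm p q t a * fpqNorm p' q' (fun k y => (t k y)⁻¹) b := by
        have := ENNReal.lintegral_mul_le_Lp_mul_Lq volume hp
          ((aemeasurable_fpqBody hq.pos ht a).pow_const (1 / q))
          ((aemeasurable_fpqBody hq.symm.pos ht' b).pow_const (1 / q'))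
        simpa only [fpqNorm, Pi.mul_apply, ← ENNReal.rpow_mul, one_div_mul_eq_div] using this

theorem pairing_bound_general {n : ℕ} (θ p q : ℝ) (hθ : 1 < θ) (hθp : θ ≤ p)
    (hq : 1 < q) (t : ℤ → (Fin n → ℝ) → ℝ)
    (hw : ∀ k, IsWeight (t k))
    (lam s : ℤ → (Fin n → ℤ) → ℂ)
    (hlam : fpqNorm (conjExp p) (conjExp q) (fun k y => (t k y)⁻¹) (cabs lam) < ⊤)
    (hs : fpqNorm p q t (cabs s) < ⊤) :
    Summable (fun km : ℤ × (Fin n → ℤ) =>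
      ‖s km.1 km.2 * (starRingEnd ℂ) (lam km.1 km.2)‖) ∧
    ENNReal.ofReal (∑' km : ℤ × (Fin n → ℤ),
        ‖s km.1 km.2 * (starRingEnd ℂ) (lam km.1 km.2)‖)
      ≤ fpqNorm p q t (cabs s) *
        fpqNorm (conjExp p) (conjExp q) (fun k y => (t k y)⁻¹) (cabs lam) := by
  have hnorm : ∀ km : ℤ × (Fin n → ℤ),
      ENNReal.ofReal ‖s km.1 km.2 * (starRingEnd ℂ) (lam km.1 km.2)‖
        = cabs s km.1 km.2 * cabs lam km.1 km.2 := fun km => by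
    rw [norm_mul, Complex.norm_conj, ENNReal.ofReal_mul (norm_nonneg _), cabs, cabs]
  -- `conjExp` unfolds to `Real.conjExponent`.
  have hbound := tsum_mul_le_fpqNorm_mul_fpqNorm
    (.conjExponent (hθ.trans_le hθp)) (.conjExponent hq)
    (fun k => (hw k).1.aestronglyMeasurable.aemeasurable)
    (fun k => (hw k).2.mono fun _ hx => hx.ne') (cabs s) (cabs lam)
  exact Real.summable_and_ofReal_tsum_le (fun _ => norm_nonneg _)
    ((tsum_congr hnorm).trans_le hbound) (ENNReal.mul_lt_top hs hlam)

/-- Hölder pairing bound: for `λ ∈ ḟ_{p',q'}({t_k⁻¹})` and `s ∈ ḟ_{p,q}({t_k})`,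
the pairing converges absolutely and `|l_λ(s)| ≤ ‖s‖·‖λ‖`. -/
theorem pairing_bound {n : ℕ} (θ p q C : ℝ) (hθ : 1 < θ) (hθp : θ ≤ p)
    (hq : 1 < q) (hC : 0 < C) (t : ℤ → (Fin n → ℝ) → ℝ)
    (hw : ∀ k, IsWeight (t k))
    (hadm : ∀ k, LocallyIntegrable (fun y => |t k y| ^ p) volume)
    (hcond : ∀ (k : ℤ) (x : Fin n → ℝ) (ρ : ℝ), 0 < ρ →
      avgP (cube x ρ) p (t k) *
          avgP (cube x ρ) (θ * conjExp (p / θ)) (fun y => (t k y)⁻¹)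
        ≤ ENNReal.ofReal C)
    (lam s : ℤ → (Fin n → ℤ) → ℂ)
    (hlam : fpqNorm (conjExp p) (conjExp q) (fun k y => (t k y)⁻¹) (cabs lam) < ⊤)
    (hs : fpqNorm p q t (cabs s) < ⊤) :
    Summable (fun km : ℤ × (Fin n → ℤ) =>
      ‖s km.1 km.2 * (starRingEnd ℂ) (lam km.1 km.2)‖) ∧
    ENNReal.ofReal (∑' km : ℤ × (Fin n → ℤ),
        ‖s km.1 km.2 * (starRingEnd ℂ) (lam km.1 km.2)‖)
      ≤ fpqNorm p q t (cabs s) *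
        fpqNorm (conjExp p) (conjExp q) (fun k y => (t k y)⁻¹) (cabs lam) :=
  pairing_bound_general θ p q hθ hθp hq t hw lam s hlam hs
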